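/- Let S' = K[x_1,...,x_{n-1}], S = S'[x_n], I ⊊ J monomial ideals of S', and T = (I + x_n·J)S. Then sdepth_S(T) ≥ min{sdepth_{S'}(I), sdepth_S(JS)}. -/

import Mathlib

open MvPolynomial

/-- The set of exponent vectors of monomials in the Stanley space `aK[Z]`. -/
def stanleyCell {n : ℕ} (a : Fin n →₀ ℕ) (Z : Finset (Fin n)) : Set (Fin n →₀ ℕ) :=
  {b | (∀ i, a i ≤ b i) ∧ ∀ i, i ∉ Z → b i = a i}

/-- A Stanley decomposition of a set `M` of exponent vectors: a finite family of
Stanley spaces whose monomial sets partition `M`. -/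
def IsStanleyDecomp {n : ℕ} (M : Set (Fin n →₀ ℕ))
    (D : Finset ((Fin n →₀ ℕ) × Finset (Fin n))) : Prop :=
  (∀ p ∈ D, stanleyCell p.1 p.2 ⊆ M) ∧
    ∀ b ∈ M, ∃! p : (Fin n →₀ ℕ) × Finset (Fin n), p ∈ D ∧ b ∈ stanleyCell p.1 p.2

/-- Stanley depth of a set of exponent vectors. -/
noncomputable def sdepthSet {n : ℕ} (M : Set (Fin n →₀ ℕ)) : ℕ :=
  sSup {k | ∃ D, IsStanleyDecomp M D ∧ ∀ p ∈ D, k ≤ p.2.card}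

/-- The set of exponent vectors of monomials belonging to an ideal. -/
def monoSet {K : Type} [Field K] {n : ℕ} (I : Ideal (MvPolynomial (Fin n) K)) :
    Set (Fin n →₀ ℕ) := {d | (monomial d (1 : K)) ∈ I}

/-- Stanley depth of a monomial ideal. -/
noncomputable def sdepthIdeal {K : Type} [Field K] {n : ℕ}
    (I : Ideal (MvPolynomial (Fin n) K)) : ℕ := sdepthSet (monoSet I)

/-- Stanley depth of the quotient `J/I` of monomial ideals. -/
noncomputable def sdepthQuot {K : Type} [Field K] {n : ℕ}
    (I J : Ideal (MvPolynomial (Fin n) K)) : ℕ := sdepthSet (monoSet J \ monoSet I)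

/-- Depth of a module with respect to an ideal `m`: the supremum of lengths of
regular sequences on `M` consisting of elements of `m`. -/
noncomputable def mdepth {R : Type} [CommRing R] (m : Ideal R)
    (M : Type) [AddCommGroup M] [Module R M] : ℕ :=
  sSup {k | ∃ rs : List R, rs.length = k ∧ (∀ r ∈ rs, r ∈ m) ∧
    RingTheory.Sequence.IsRegular M rs}

/-- The maximal graded ideal `(x_1, ..., x_n)`. -/
noncomputable def maxIdeal (K : Type) [Field K] (n : ℕ) : Ideal (MvPolynomial (Fin n) K) :=
  Ideal.span (Set.range X)

/-- `J/I` as a module. -/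
abbrev idealQuot {R : Type} [CommRing R] (I J : Ideal R) :=
  ↥J ⧸ (Submodule.comap J.subtype I)

/-- A monomial ideal: generated by monomials. -/
def IsMonomialIdeal {K : Type} [Field K] {n : ℕ}
    (I : Ideal (MvPolynomial (Fin n) K)) : Prop :=
  ∃ G : Set (Fin n →₀ ℕ), I = Ideal.span ((fun d => (monomial d (1 : K))) '' G)

/-- A squarefree monomial ideal: generated by squarefree monomials. -/
def IsSqfreeMonomialIdeal {K : Type} [Field K] {n : ℕ}
    (I : Ideal (MvPolynomial (Fin n) K)) : Prop :=
  ∃ G : Set (Fin n →₀ ℕ), (∀ d ∈ G, ∀ i, d i ≤ 1) ∧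
    I = Ideal.span ((fun d => (monomial d (1 : K))) '' G)

/-- The inclusion `K[x_1,...,x_{n-1}] → K[x_1,...,x_n]`. -/
noncomputable def extMap (K : Type) [Field K] (n : ℕ) :
    MvPolynomial (Fin n) K →+* MvPolynomial (Fin (n + 1)) K :=
  (rename (Fin.castSucc) : MvPolynomial (Fin n) K →ₐ[K] MvPolynomial (Fin (n + 1)) K).toRingHom

/-- Krull dimension of a module: dimension of `R / ann M`. -/
noncomputable def mdim (R : Type) [CommRing R]
    (M : Type) [AddCommGroup M] [Module R M] : WithBot (WithTop ℕ) :=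
  ringKrullDim (R ⧸ Module.annihilator R M)

/-!
A monomial of `T` either has `x_n`-degree `0`, and then it is a monomial of `I`, or it is `x_n`
times a monomial of `JS` (monomials of `I` of positive `x_n`-degree lie there too, as `I ⊆ J`).
So a Stanley decomposition of `I`, read in `S` with the same variable sets, together with one of
`JS` translated by `x_n`, is a Stanley decomposition of `T`, and all its Stanley spaces have
dimension at least `min (sdepth I) (sdepth JS)`.
-/

section Decompositions

variable {m m' : ℕ}

/-- The empty set has Stanley decompositions of every depth, so `sSup` returns the junk value
`0` for it. -/
lemma sdepthSet_empty : sdepthSet (∅ : Set (Fin m →₀ ℕ)) = 0 := by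
  have hall : {k | ∃ D, IsStanleyDecomp (∅ : Set (Fin m →₀ ℕ)) D ∧ ∀ p ∈ D, k ≤ p.2.card} =
      Set.univ :=
    Set.eq_univ_of_forall fun _ => ⟨∅, ⟨by simp, by simp⟩, by simp⟩
  rw [sdepthSet, hall]
  exact Nat.sSup_of_not_bddAbove not_bddAbove_univ

lemma nonempty_of_sdepthSet_pos {M : Set (Fin m →₀ ℕ)} (h : 0 < sdepthSet M) : M.Nonempty := by
  rw [Set.nonempty_iff_ne_empty]
  rintro rfl
  simp [sdepthSet_empty] at h

lemma exists_isStanleyDecomp_of_sdepthSet_pos {M : Set (Fin m →₀ ℕ)} (h : 0 < sdepthSet M) :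
    ∃ D, IsStanleyDecomp M D ∧ ∀ p ∈ D, sdepthSet M ≤ p.2.card := by
  have hne : {k | ∃ D, IsStanleyDecomp M D ∧ ∀ p ∈ D, k ≤ p.2.card}.Nonempty := by
    by_contra hne
    rw [Set.not_nonempty_iff_eq_empty] at hne
    rw [sdepthSet, hne, csSup_empty] at h
    exact lt_irrefl _ h
  have hbdd : BddAbove {k | ∃ D, IsStanleyDecomp M D ∧ ∀ p ∈ D, k ≤ p.2.card} := by
    by_contra hbdd
    rw [sdepthSet, Nat.sSup_of_not_bddAbove hbdd] at h
    exact lt_irrefl _ h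
  exact Nat.sSup_mem hne hbdd

lemma le_sdepthSet {M : Set (Fin m →₀ ℕ)} {D : Finset ((Fin m →₀ ℕ) × Finset (Fin m))} {k : ℕ}
    (hM : M.Nonempty) (hD : IsStanleyDecomp M D) (hk : ∀ p ∈ D, k ≤ p.2.card) :
    k ≤ sdepthSet M := by
  refine le_csSup ⟨m, ?_⟩ ⟨D, hD, hk⟩
  rintro k' ⟨D', hD', hk'⟩
  obtain ⟨b, hb⟩ := hM
  obtain ⟨p, ⟨hp, -⟩, -⟩ := hD'.2 b hb
  simpa using (hk' p hp).trans (Finset.card_le_univ p.2)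

lemma IsStanleyDecomp.existsUnique_union_of_mem_left {M₁ M₂ : Set (Fin m →₀ ℕ)}
    {D₁ D₂ : Finset ((Fin m →₀ ℕ) × Finset (Fin m))} (h₁ : IsStanleyDecomp M₁ D₁)
    (h₂ : ∀ p ∈ D₂, stanleyCell p.1 p.2 ⊆ M₂) (hM : Disjoint M₁ M₂) {b : Fin m →₀ ℕ}
    (hb : b ∈ M₁) : ∃! p, p ∈ D₁ ∪ D₂ ∧ b ∈ stanleyCell p.1 p.2 := by
  obtain ⟨p, ⟨hp, hbp⟩, huniq⟩ := h₁.2 b hb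
  refine ⟨p, ⟨Finset.mem_union_left _ hp, hbp⟩, ?_⟩
  rintro q ⟨hq, hbq⟩
  rcases Finset.mem_union.mp hq with hq | hq
  · exact huniq q ⟨hq, hbq⟩
  · exact absurd (h₂ q hq hbq) (Set.disjoint_left.mp hM hb)

lemma IsStanleyDecomp.union {M₁ M₂ : Set (Fin m →₀ ℕ)}
    {D₁ D₂ : Finset ((Fin m →₀ ℕ) × Finset (Fin m))} (h₁ : IsStanleyDecomp M₁ D₁)
    (h₂ : IsStanleyDecomp M₂ D₂) (hM : Disjoint M₁ M₂) :
    IsStanleyDecomp (M₁ ∪ M₂) (D₁ ∪ D₂) := by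
  refine ⟨fun p hp => ?_, fun b hb => ?_⟩
  · rcases Finset.mem_union.mp hp with hp | hp
    · exact (h₁.1 p hp).trans Set.subset_union_left
    · exact (h₂.1 p hp).trans Set.subset_union_right
  · rcases hb with hb | hb
    · exact h₁.existsUnique_union_of_mem_left h₂.1 hM hb
    · rw [Finset.union_comm]
      exact h₂.existsUnique_union_of_mem_left h₁.1 hM.symm hb

lemma IsStanleyDecomp.image {M : Set (Fin m →₀ ℕ)} {D : Finset ((Fin m →₀ ℕ) × Finset (Fin m))}
    (hD : IsStanleyDecomp M D) {φ : (Fin m →₀ ℕ) → (Fin m' →₀ ℕ)} (hφ : Function.Injective φ)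
    (ψ : Finset (Fin m) → Finset (Fin m'))
    (hcell : ∀ a Z, stanleyCell (φ a) (ψ Z) = φ '' stanleyCell a Z) :
    IsStanleyDecomp (φ '' M) (D.image (Prod.map φ ψ)) := by
  refine ⟨?_, ?_⟩
  · simp only [Finset.forall_mem_image, Prod.map_fst, Prod.map_snd, hcell]
    exact fun p hp => Set.image_mono (hD.1 p hp)
  · rintro _ ⟨b, hb, rfl⟩
    obtain ⟨p, ⟨hp, hbp⟩, huniq⟩ := hD.2 b hb
    refine ⟨Prod.map φ ψ p, ⟨Finset.mem_image_of_mem _ hp, ?_⟩, ?_⟩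
    · rw [Prod.map_fst, Prod.map_snd, hcell]
      exact Set.mem_image_of_mem φ hbp
    · rintro _ ⟨hq', hbq⟩
      obtain ⟨q, hq, rfl⟩ := Finset.mem_image.mp hq'
      rw [Prod.map_fst, Prod.map_snd, hcell, hφ.mem_set_image] at hbq
      rw [huniq q ⟨hq, hbq⟩]

lemma stanleyCell_add (a c : Fin m →₀ ℕ) (Z : Finset (Fin m)) :
    stanleyCell (a + c) Z = (· + c) '' stanleyCell a Z := by
  ext b
  simp only [stanleyCell, Set.mem_image, Finsupp.add_apply]
  constructor
  · rintro ⟨hle, heq⟩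
    refine ⟨b - c, ⟨fun i => ?_, fun i hi => ?_⟩, ?_⟩
    · simpa using Nat.le_sub_of_add_le (hle i)
    · simp [heq i hi]
    · ext i
      simpa using Nat.sub_add_cancel (le_of_add_le_right (hle i))
  · rintro ⟨d, ⟨hle, heq⟩, rfl⟩
    exact ⟨fun i => by simpa using hle i, fun i hi => by simp [heq i hi]⟩

end Decompositions

section LastVariable

variable {n : ℕ}

noncomputable def liftExp (a : Fin n →₀ ℕ) : Fin (n + 1) →₀ ℕ :=
  Finsupp.mapDomain Fin.castSucc a

noncomputable def initExp (b : Fin (n + 1) →₀ ℕ) : Fin n →₀ ℕ :=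
  Finsupp.equivFunOnFinite.symm fun i => b i.castSucc

@[simp] lemma initExp_apply (b : Fin (n + 1) →₀ ℕ) (i : Fin n) : initExp b i = b i.castSucc :=
  rfl

@[simp] lemma liftExp_castSucc (a : Fin n →₀ ℕ) (i : Fin n) : liftExp a i.castSucc = a i :=
  Finsupp.mapDomain_apply (Fin.castSucc_injective n) a i

@[simp] lemma liftExp_last (a : Fin n →₀ ℕ) : liftExp a (Fin.last n) = 0 :=
  Finsupp.mapDomain_of_notMem_range _ _ fun ⟨j, hj⟩ => (Fin.castSucc_lt_last j).ne hj

@[simp] lemma initExp_liftExp (a : Fin n →₀ ℕ) : initExp (liftExp a) = a := by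
  ext i
  simp

lemma liftExp_injective : Function.Injective (liftExp (n := n)) :=
  Function.LeftInverse.injective initExp_liftExp

lemma liftExp_initExp_of_last_eq_zero {b : Fin (n + 1) →₀ ℕ} (h : b (Fin.last n) = 0) :
    liftExp (initExp b) = b := by
  ext i
  induction i using Fin.lastCases <;> simp [h]

lemma liftExp_le_iff {a : Fin n →₀ ℕ} {b : Fin (n + 1) →₀ ℕ} :
    liftExp a ≤ b ↔ a ≤ initExp b := by
  simp only [Finsupp.le_def, Fin.forall_fin_succ', liftExp_castSucc, liftExp_last, initExp_apply,
    zero_le, and_true]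

@[simp] lemma initExp_sub_single_last (b : Fin (n + 1) →₀ ℕ) :
    initExp (b - Finsupp.single (Fin.last n) 1) = initExp b := by
  ext i
  simp

lemma stanleyCell_liftExp (a : Fin n →₀ ℕ) (Z : Finset (Fin n)) :
    stanleyCell (liftExp a) (Z.map Fin.castSuccEmb) = liftExp '' stanleyCell a Z := by
  ext b
  simp only [stanleyCell, Set.mem_image, Fin.forall_fin_succ',
    Finset.mem_map, Fin.castSuccEmb_apply, (Fin.castSucc_injective n).eq_iff, exists_eq_right]
  constructor
  · rintro ⟨⟨hle, -⟩, heq, hlast⟩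
    have hlast : b (Fin.last n) = 0 := by
      simpa using hlast fun ⟨j, _, hj⟩ => (Fin.castSucc_lt_last j).ne hj
    exact ⟨initExp b, ⟨fun i => by simpa using hle i, fun i hi => by simpa using heq i hi⟩,
      liftExp_initExp_of_last_eq_zero hlast⟩
  · rintro ⟨d, ⟨hle, heq⟩, rfl⟩
    refine ⟨⟨fun i => by simpa using hle i, by simp⟩, fun i hi => by simpa using heq i hi,
      fun _ => by simp⟩

lemma disjoint_image_liftExp_image_add_single_last (M : Set (Fin n →₀ ℕ))
    (N : Set (Fin (n + 1) →₀ ℕ)) :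
    Disjoint (liftExp '' M) ((· + Finsupp.single (Fin.last n) 1) '' N) := by
  rw [Set.disjoint_left]
  rintro _ ⟨a, -, rfl⟩ ⟨b, -, h⟩
  simpa using congrArg (· (Fin.last n)) h

theorem min_sdepthSet_le_sdepthSet_union (M : Set (Fin n →₀ ℕ)) (N : Set (Fin (n + 1) →₀ ℕ)) :
    min (sdepthSet M) (sdepthSet N) ≤
      sdepthSet (liftExp '' M ∪ (· + Finsupp.single (Fin.last n) 1) '' N) := by
  rcases Nat.eq_zero_or_pos (min (sdepthSet M) (sdepthSet N)) with h | h
  · exact h ▸ Nat.zero_le _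
  obtain ⟨hM, hN⟩ := lt_min_iff.mp h
  obtain ⟨DM, hDM, hcardM⟩ := exists_isStanleyDecomp_of_sdepthSet_pos hM
  obtain ⟨DN, hDN, hcardN⟩ := exists_isStanleyDecomp_of_sdepthSet_pos hN
  have hDM' := hDM.image liftExp_injective (·.map Fin.castSuccEmb) stanleyCell_liftExp
  have hDN' := hDN.image (add_left_injective (Finsupp.single (Fin.last n) 1)) id
    fun a Z => stanleyCell_add a _ Z
  refine le_sdepthSet (((nonempty_of_sdepthSet_pos hN).image _).mono Set.subset_union_right)
    (hDM'.union hDN' (disjoint_image_liftExp_image_add_single_last M N)) ?_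
  simp only [Finset.mem_union, Finset.mem_image]
  rintro _ (⟨p, hp, rfl⟩ | ⟨p, hp, rfl⟩)
  · simpa using (min_le_left _ _).trans (hcardM p hp)
  · exact (min_le_right _ _).trans (hcardN p hp)

lemma preimage_initExp_union_image_add_single_last {M N : Set (Fin n →₀ ℕ)} (hMN : M ⊆ N) :
    initExp ⁻¹' M ∪ (· + Finsupp.single (Fin.last n) 1) '' (initExp ⁻¹' N) =
      liftExp '' M ∪ (· + Finsupp.single (Fin.last n) 1) '' (initExp ⁻¹' N) := by
  refine subset_antisymm (Set.union_subset ?_ Set.subset_union_right)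
    (Set.union_subset_union_left _ ?_)
  · intro b hb
    by_cases hlast : b (Fin.last n) = 0
    · exact Or.inl ⟨initExp b, hb, liftExp_initExp_of_last_eq_zero hlast⟩
    · refine Or.inr ⟨b - Finsupp.single (Fin.last n) 1, ?_, ?_⟩
      · simpa using hMN hb
      · exact tsub_add_cancel_of_le (Finsupp.single_le_iff.mpr (Nat.one_le_iff_ne_zero.mpr hlast))
  · rintro _ ⟨a, ha, rfl⟩
    simpa using ha

end LastVariable

section MonomialIdeals

variable {K : Type} [Field K]

lemma monoSet_mono {m : ℕ} {I J : Ideal (MvPolynomial (Fin m) K)} (h : I ≤ J) :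
    monoSet I ⊆ monoSet J :=
  fun _ hb => h hb

lemma monoSet_span_monomial {m : ℕ} (G : Set (Fin m →₀ ℕ)) :
    monoSet (Ideal.span ((fun d => monomial d (1 : K)) '' G)) = upperClosure G := by
  ext b
  simp [monoSet, mem_ideal_span_monomial_image, mem_upperClosure]

lemma extMap_monomial {n : ℕ} (d : Fin n →₀ ℕ) :
    extMap K n (monomial d 1) = monomial (liftExp d) 1 :=
  rename_monomial _ _ _

lemma map_extMap_span_monomial {n : ℕ} (G : Set (Fin n →₀ ℕ)) :
    (Ideal.span ((fun d => monomial d (1 : K)) '' G)).map (extMap K n) =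
      Ideal.span ((fun d => monomial d (1 : K)) '' (liftExp '' G)) := by
  simp only [Ideal.map_span, Set.image_image, extMap_monomial]

lemma span_X_mul_span_monomial {m : ℕ} (i : Fin m) (G : Set (Fin m →₀ ℕ)) :
    Ideal.span {X i} * Ideal.span ((fun d => monomial d (1 : K)) '' G) =
      Ideal.span ((fun d => monomial d (1 : K)) '' ((· + Finsupp.single i 1) '' G)) := by
  simp only [Ideal.span_mul_span', Set.singleton_mul, Set.image_image, X, monomial_mul, one_mul,
    add_comm (Finsupp.single i 1)]

lemma IsMonomialIdeal.map_extMap {n : ℕ} {I : Ideal (MvPolynomial (Fin n) K)}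
    (hI : IsMonomialIdeal I) : IsMonomialIdeal (I.map (extMap K n)) := by
  obtain ⟨G, rfl⟩ := hI
  exact ⟨_, map_extMap_span_monomial G⟩

lemma IsMonomialIdeal.span_X_mul {m : ℕ} {I : Ideal (MvPolynomial (Fin m) K)}
    (hI : IsMonomialIdeal I) (i : Fin m) : IsMonomialIdeal (Ideal.span {X i} * I) := by
  obtain ⟨G, rfl⟩ := hI
  exact ⟨_, span_X_mul_span_monomial i G⟩

lemma monoSet_sup {m : ℕ} {I J : Ideal (MvPolynomial (Fin m) K)} (hI : IsMonomialIdeal I)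
    (hJ : IsMonomialIdeal J) : monoSet (I ⊔ J) = monoSet I ∪ monoSet J := by
  obtain ⟨G, rfl⟩ := hI
  obtain ⟨H, rfl⟩ := hJ
  rw [← Ideal.span_union, ← Set.image_union, monoSet_span_monomial, monoSet_span_monomial,
    monoSet_span_monomial, upperClosure_union, UpperSet.coe_inf]

lemma monoSet_map_extMap {n : ℕ} {I : Ideal (MvPolynomial (Fin n) K)} (hI : IsMonomialIdeal I) :
    monoSet (I.map (extMap K n)) = initExp ⁻¹' monoSet I := by
  obtain ⟨G, rfl⟩ := hI
  ext b
  simp [map_extMap_span_monomial, monoSet_span_monomial, mem_upperClosure, liftExp_le_iff]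

lemma monoSet_span_X_mul {m : ℕ} {I : Ideal (MvPolynomial (Fin m) K)} (hI : IsMonomialIdeal I)
    (i : Fin m) : monoSet (Ideal.span {X i} * I) = (· + Finsupp.single i 1) '' monoSet I := by
  obtain ⟨G, rfl⟩ := hI
  ext b
  simp only [span_X_mul_span_monomial, monoSet_span_monomial, SetLike.mem_coe, mem_upperClosure,
    Set.mem_image, exists_exists_and_eq_and]
  constructor
  · rintro ⟨g, hg, hle⟩
    exact ⟨b - Finsupp.single i 1, ⟨g, hg, le_tsub_of_add_le_right hle⟩,
      tsub_add_cancel_of_le (le_add_self.trans hle)⟩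
  · rintro ⟨c, ⟨g, hg, hle⟩, rfl⟩
    exact ⟨g, hg, add_le_add hle le_rfl⟩

end MonomialIdeals

theorem sdepth_T_ge_min_I_JS {K : Type} [Field K] {n : ℕ}
    (I J : Ideal (MvPolynomial (Fin n) K))
    (hI : IsMonomialIdeal I) (hJ : IsMonomialIdeal J) (hIJ : I < J) :
    sdepthIdeal (Ideal.map (extMap K n) I ⊔
        Ideal.span {X (Fin.last n)} * Ideal.map (extMap K n) J) ≥
      min (sdepthIdeal I) (sdepthIdeal (Ideal.map (extMap K n) J)) := by
  have hT : monoSet (Ideal.map (extMap K n) I ⊔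
      Ideal.span {X (Fin.last n)} * Ideal.map (extMap K n) J) =
      liftExp '' monoSet I ∪
        (· + Finsupp.single (Fin.last n) 1) '' monoSet (Ideal.map (extMap K n) J) := by
    rw [monoSet_sup hI.map_extMap (hJ.map_extMap.span_X_mul _), monoSet_span_X_mul hJ.map_extMap,
      monoSet_map_extMap hI, monoSet_map_extMap hJ,
      preimage_initExp_union_image_add_single_last (monoSet_mono hIJ.le)]
  rw [ge_iff_le, sdepthIdeal, sdepthIdeal, sdepthIdeal, hT]
  exact min_sdepthSet_le_sdepthSet_union _ _
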